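/- arXiv:2309.04320 — 6 statements merged into one kernel-verified Lean document; each statement's English description precedes it below -/
import Mathlib

section
/- Let V be a real vector space of dimension 2d and f : V × V → ℝ a symmetric bilinear form. Suppose there is a basis {α₁, β₁, …, α_d, β_d} of V with f(α_j, α_k) = f(β_j, β_k) and f(α_j, β_k) = −f(α_k, β_j) for all j, k. Define the d×d complex matrix Q by Q_{jk} = f(α_j, α_k) + f(β_j, β_k) + i(f(α_j, β_k) − f(β_j, α_k)). Then Q is Hermitian, and the positive index of inertia of f equals 2·i₊(Q), the negative index equals 2·i₋(Q), and dim ker f = 2·dim ker Q. In particular f is positive definite if and only if Q is positive definite. -/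
open Matrix Finset Polynomial
open scoped ComplexOrder

section aux
variable {n K : Type*} [Fintype n] [DecidableEq n] [CommRing K]

lemma aux_charmatrix_conj (P Pi A : Matrix n n K) (hPPi : P * Pi = 1) :
    charmatrix (P * A * Pi) = P.map C * charmatrix A * Pi.map C := by
  have key : (C : K →+* K[X]).mapMatrix P * charmatrix A * (C : K →+* K[X]).mapMatrix Pi
      = charmatrix (P * A * Pi) := by
    set F : Matrix n n K →+* Matrix n n K[X] := (C : K →+* K[X]).mapMatrix with hF
    have hc : (Matrix.scalar n (X : K[X])) * F P = F P * Matrix.scalar n (X : K[X]) :=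
      (scalar_commute (X : K[X]) (fun r => Commute.all _ _) (F P)).eq
    calc F P * charmatrix A * F Pi
        = F P * Matrix.scalar n (X : K[X]) * F Pi - F P * (F A) * F Pi := by
          rw [charmatrix, Matrix.mul_sub, Matrix.sub_mul]
      _ = Matrix.scalar n (X : K[X]) * F (P * Pi) - F (P * A * Pi) := by
          rw [← hc, _root_.map_mul, _root_.map_mul, _root_.map_mul, mul_assoc]
      _ = charmatrix (P * A * Pi) := by
          rw [hPPi, _root_.map_one, mul_one, charmatrix]
  rw [← key]
  rfl

lemma aux_charpoly_conj (P Pi A : Matrix n n K) (hPPi : P * Pi = 1) :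
    (P * A * Pi).charpoly = A.charpoly := by
  unfold Matrix.charpoly
  rw [aux_charmatrix_conj P Pi A hPPi, det_mul, det_mul,
    mul_comm ((P.map (C : K → K[X])).det) _, mul_assoc, ← det_mul, ← Matrix.map_mul, hPPi]
  simp

lemma aux_charpoly_diagonal (v : n → K) :
    (diagonal v).charpoly = ∏ i, (X - C (v i)) := by
  unfold Matrix.charpoly
  have : charmatrix (diagonal v) = diagonal fun i => (X : K[X]) - C (v i) := by
    ext i j
    rcases eq_or_ne i j with rfl | h
    · simp
    · simp [charmatrix_apply_ne _ _ _ h, diagonal_apply_ne _ h]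
  rw [this, det_diagonal]

lemma aux_charpoly_transpose (A : Matrix n n K) : Aᵀ.charpoly = A.charpoly := by
  unfold Matrix.charpoly
  have : charmatrix Aᵀ = (charmatrix A)ᵀ := by
    ext i j
    rcases eq_or_ne i j with rfl | h
    · simp
    · simp [charmatrix_apply_ne _ _ _ h, charmatrix_apply_ne _ _ _ (Ne.symm h)]
  rw [this, det_transpose]

lemma aux_charpoly_blockDiagonal {o : Type*} [Fintype o] [DecidableEq o]
    (B : o → Matrix n n K) :
    (blockDiagonal B).charpoly = ∏ k, (B k).charpoly := by
  unfold Matrix.charpoly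
  have : charmatrix (blockDiagonal B) = blockDiagonal fun k => charmatrix (B k) := by
    ext ⟨i, k⟩ ⟨j, k'⟩
    rcases eq_or_ne k k' with rfl | hk
    · rcases eq_or_ne i j with rfl | hi
      · simp [blockDiagonal_apply]
      · simp [charmatrix_apply_ne _ _ _ (by simp [hi] : ((i,k) : n × o) ≠ (j,k)),
          blockDiagonal_apply, charmatrix_apply_ne _ _ _ hi]
    · simp [charmatrix_apply_ne _ _ _ (by simp [hk] : ((i,k) : n × o) ≠ (j,k')),
        blockDiagonal_apply, hk]
  rw [this, det_blockDiagonal]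
end aux

section herm
variable {𝕜 : Type*} [RCLike 𝕜] {n : Type*} [Fintype n] [DecidableEq n]

lemma aux_charpoly_hermitian {A : Matrix n n 𝕜} (hA : A.IsHermitian) :
    A.charpoly = ∏ i, (X - C ((hA.eigenvalues i : 𝕜))) := by
  conv_lhs => rw [hA.spectral_theorem, Unitary.conjStarAlgAut_apply]
  rw [aux_charpoly_conj _ _ _ (mem_unitaryGroup_iff.mp hA.eigenvectorUnitary.2),
    aux_charpoly_diagonal]
  rfl

lemma aux_posDef_iff {A : Matrix n n 𝕜} (hA : A.IsHermitian) :
    A.PosDef ↔ ∀ i, 0 < hA.eigenvalues i := by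
  constructor
  · exact fun h => h.eigenvalues_pos
  · intro h
    refine Matrix.PosDef.of_dotProduct_mulVec_pos hA fun x hx => ?_
    set U : Matrix n n 𝕜 := (hA.eigenvectorUnitary : Matrix n n 𝕜) with hUdef
    have hU : U * star U = 1 := mem_unitaryGroup_iff.mp hA.eigenvectorUnitary.2
    set y : n → 𝕜 := star U *ᵥ x with hy
    have hyne : y ≠ 0 := by
      intro h0
      apply hx
      have : U *ᵥ y = x := by
        rw [hy, mulVec_mulVec, hU, one_mulVec]
      rw [← this, h0, mulVec_zero]
    have hD : (diagonal (RCLike.ofReal ∘ hA.eigenvalues) : Matrix n n 𝕜).PosDef :=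
      posDef_diagonal_iff.mpr fun i => by
        simpa using (RCLike.ofReal_pos (K := 𝕜)).mpr (h i)
    have hxA : star x ⬝ᵥ A *ᵥ x
        = star y ⬝ᵥ (diagonal (RCLike.ofReal ∘ hA.eigenvalues) : Matrix n n 𝕜) *ᵥ y := by
      conv_lhs => rw [hA.spectral_theorem, Unitary.conjStarAlgAut_apply]
      rw [← mulVec_mulVec, ← mulVec_mulVec, dotProduct_mulVec (star x), hy, star_mulVec,
        star_eq_conjTranspose, conjTranspose_conjTranspose]
    rw [hxA]
    exact hD.dotProduct_mulVec_pos hyne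

end herm

lemma aux_charpoly_two_smul {n : Type*} [Fintype n] [DecidableEq n]
    {A : Matrix n n ℝ} (hA : A.IsHermitian) :
    ((2:ℝ) • A).charpoly = ∏ i, (X - C (2 * hA.eigenvalues i)) := by
  conv_lhs => rw [hA.spectral_theorem, Unitary.conjStarAlgAut_apply]
  have : (2:ℝ) • ((hA.eigenvectorUnitary : Matrix n n ℝ)
        * diagonal (RCLike.ofReal ∘ hA.eigenvalues) * (star hA.eigenvectorUnitary : Matrix n n ℝ))
      = (hA.eigenvectorUnitary : Matrix n n ℝ)
        * diagonal (fun i => 2 * hA.eigenvalues i) * (star hA.eigenvectorUnitary : Matrix n n ℝ) := by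
    rw [← Matrix.smul_mul, ← Matrix.mul_smul, ← diagonal_smul]
    congr 2
  rw [this, aux_charpoly_conj _ _ _ (mem_unitaryGroup_iff.mp hA.eigenvectorUnitary.2),
    aux_charpoly_diagonal]

theorem stmt3 (d : ℕ) (V : Type*) [AddCommGroup V] [Module ℝ V]
    (b : Module.Basis (Fin d × Fin 2) ℝ V)
    (f : LinearMap.BilinForm ℝ V) (hsymm : ∀ x y, f x y = f y x)
    (h1 : ∀ j k : Fin d, f (b (j, 0)) (b (k, 0)) = f (b (j, 1)) (b (k, 1)))
    (h2 : ∀ j k : Fin d, f (b (j, 0)) (b (k, 1)) = - f (b (k, 0)) (b (j, 1)))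
    (Q : Matrix (Fin d) (Fin d) ℂ)
    (hQ : ∀ j k : Fin d, Q j k =
      ((f (b (j, 0)) (b (k, 0)) + f (b (j, 1)) (b (k, 1)) : ℝ) : ℂ)
        + Complex.I * ((f (b (j, 0)) (b (k, 1)) - f (b (j, 1)) (b (k, 0)) : ℝ) : ℂ))
    (M : Matrix (Fin d × Fin 2) (Fin d × Fin 2) ℝ)
    (hM : ∀ x y, M x y = f (b x) (b y)) :
    Q.IsHermitian ∧
    (∀ (hMh : M.IsHermitian) (hQh : Q.IsHermitian),
      (Finset.univ.filter (fun i => 0 < hMh.eigenvalues i)).card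
        = 2 * (Finset.univ.filter (fun i => 0 < hQh.eigenvalues i)).card ∧
      (Finset.univ.filter (fun i => hMh.eigenvalues i < 0)).card
        = 2 * (Finset.univ.filter (fun i => hQh.eigenvalues i < 0)).card) ∧
    Module.finrank ℝ ↥(LinearMap.ker f)
      = 2 * Module.finrank ℂ ↥(LinearMap.ker Q.mulVecLin) ∧
    ((∀ v : V, v ≠ 0 → 0 < f v v) ↔ Q.PosDef) := by
  classical
  -- basic symmetry facts
  have hab : ∀ j k, f (b (j,1)) (b (k,1)) = f (b (j,0)) (b (k,0)) := fun j k => (h1 j k).symm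
  have hba : ∀ j k : Fin d, f (b (j,1)) (b (k,0)) = - f (b (j,0)) (b (k,1)) := by
    intro j k; rw [hsymm]; exact h2 k j
  have hQ' : ∀ j k, Q j k = 2 * (f (b (j,0)) (b (k,0)) : ℂ)
      + Complex.I * (2 * (f (b (j,0)) (b (k,1)) : ℂ)) := by
    intro j k; rw [hQ, hab, hba]; push_cast; ring
  have hQt : ∀ j k, Qᵀ j k = 2 * (f (b (j,0)) (b (k,0)) : ℂ)
      - Complex.I * (2 * (f (b (j,0)) (b (k,1)) : ℂ)) := by
    intro j k
    rw [transpose_apply, hQ' k j, hsymm (b (k,0)) (b (j,0)), h2 k j]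
    push_cast; ring
  have hMsymm : ∀ x y, M x y = M y x := fun x y => by rw [hM, hM, hsymm]
  have hMherm : M.IsHermitian := by
    ext i j
    simp [conjTranspose_apply, hMsymm i j]
  have hQherm : Q.IsHermitian := by
    ext j k
    rw [conjTranspose_apply, hQ' k j, hQ' j k, hsymm (b (k,0)) (b (j,0)), h2 k j]
    push_cast
    simp [Complex.ext_iff]
  -- the conjugation identity
  set N : Matrix (Fin d × Fin 2) (Fin d × Fin 2) ℂ := ((2:ℝ) • M).map (algebraMap ℝ ℂ) with hN
  set sM : Matrix (Fin 2) (Fin 2) ℂ := !![1, 1; Complex.I, -Complex.I] with hsM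
  set tM : Matrix (Fin 2) (Fin 2) ℂ := !![2⁻¹, -(Complex.I/2); 2⁻¹, Complex.I/2] with htM
  set S : Matrix (Fin d × Fin 2) (Fin d × Fin 2) ℂ :=
    fun p q => if p.1 = q.1 then sM p.2 q.2 else 0 with hS
  set T : Matrix (Fin d × Fin 2) (Fin d × Fin 2) ℂ :=
    fun p q => if p.1 = q.1 then tM p.2 q.2 else 0 with hT
  set B : Fin 2 → Matrix (Fin d) (Fin d) ℂ := ![Q, Qᵀ] with hB
  have hst : sM * tM = 1 := by
    ext i j
    fin_cases i <;> fin_cases j <;>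
      simp [hsM, htM, Matrix.mul_apply, Fin.sum_univ_two, Matrix.one_apply, Complex.ext_iff] <;>
      ring_nf <;> simp [Complex.I_sq] <;> ring
  have hST : S * T = 1 := by
    ext ⟨j,ε⟩ ⟨k,δ⟩
    rw [Matrix.mul_apply, Fintype.sum_prod_type]
    have e1 : ∀ l : Fin d, (∑ γ : Fin 2, S (j,ε) (l,γ) * T (l,γ) (k,δ))
        = if l = j ∧ l = k then ∑ γ : Fin 2, sM ε γ * tM γ δ else 0 := by
      intro l
      simp only [hS, hT]
      rcases eq_or_ne j l with rfl | hjl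
      · rcases eq_or_ne j k with rfl | hjk
        · simp
        · simp [hjk]
      · simp [Ne.symm hjl, hjl]
    rw [Finset.sum_congr rfl fun l _ => e1 l]
    have e2 : (∑ γ : Fin 2, sM ε γ * tM γ δ) = (1 : Matrix (Fin 2) (Fin 2) ℂ) ε δ := by
      rw [← hst, Matrix.mul_apply]
    rcases eq_or_ne j k with rfl | hjk
    · rw [Finset.sum_eq_single j (by intro l _ hl; simp [hl]) (by simp)]
      simp [e2, Matrix.one_apply, Prod.ext_iff]
    · rw [Finset.sum_eq_zero (by intro l _; simp only [ite_eq_right_iff]; rintro ⟨rfl, rfl⟩; exact absurd rfl hjk)]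
      simp [Matrix.one_apply, Prod.ext_iff, hjk]
  have hNS : N * S = S * blockDiagonal B := by
    ext ⟨j,ε⟩ ⟨k,δ⟩
    rw [Matrix.mul_apply, Matrix.mul_apply, Fintype.sum_prod_type, Fintype.sum_prod_type]
    have hNval : ∀ p q, N p q = 2 * ((f (b p) (b q) : ℝ) : ℂ) := by
      intro p q
      simp only [hN, Matrix.map_apply, Matrix.smul_apply, hM, smul_eq_mul, Complex.coe_algebraMap]
      push_cast; ring
    have e1 : ∀ l : Fin d, (∑ γ : Fin 2, N (j,ε) (l,γ) * S (l,γ) (k,δ))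
        = if l = k then ∑ γ : Fin 2, N (j,ε) (l,γ) * sM γ δ else 0 := by
      intro l
      simp only [hS]
      rcases eq_or_ne l k with rfl | hlk
      · simp
      · simp [hlk]
    have e2 : ∀ l : Fin d, (∑ γ : Fin 2, S (j,ε) (l,γ) * blockDiagonal B (l,γ) (k,δ))
        = if l = j then sM ε δ * B δ j k else 0 := by
      intro l
      simp only [hS, blockDiagonal_apply]
      rcases eq_or_ne j l with rfl | hjl
      · rw [Finset.sum_eq_single δ (by intro γ _ hγ; simp [hγ]) (by simp)]
        simp
      · simp [Ne.symm hjl, hjl]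
    rw [Finset.sum_congr rfl fun l _ => e1 l, Finset.sum_congr rfl fun l _ => e2 l,
      Finset.sum_eq_single k (by intro l _ hl; simp [hl]) (by simp),
      Finset.sum_eq_single j (by intro l _ hl; simp [hl]) (by simp),
      Fin.sum_univ_two]
    fin_cases ε <;> fin_cases δ <;>
      simp [hNval, hB, hsM, hab, hba, hQ', hQt, Complex.I_sq] <;>
      (try simp only [h2 k j, hsymm (b (k,0)) (b (j,0)), Complex.I_sq]) <;>
      push_cast <;> (try ring) <;> (try simp only [Complex.I_sq]) <;> push_cast <;> ring
  have hTS : T * S = 1 := mul_eq_one_comm.mp hST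
  have hNeq : N = S * blockDiagonal B * T := by
    calc N = N * (S * T) := by rw [hST, mul_one]
      _ = (N * S) * T := by rw [mul_assoc]
      _ = S * blockDiagonal B * T := by rw [hNS]
  have hcharN : N.charpoly = Q.charpoly * Q.charpoly := by
    rw [hNeq, aux_charpoly_conj S T _ hST, aux_charpoly_blockDiagonal, Fin.prod_univ_two]
    simp only [hB, Matrix.cons_val_zero, Matrix.cons_val_one, Matrix.head_cons]
    rw [aux_charpoly_transpose]
  have hchar2M : ((2:ℝ) • M).charpoly = ∏ p, (X - C (2 * hMherm.eigenvalues p)) :=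
    aux_charpoly_two_smul hMherm
  have hcharQ : Q.charpoly = ∏ i, (X - C ((hQherm.eigenvalues i : ℂ))) :=
    aux_charpoly_hermitian hQherm
  have hmapchar : N.charpoly = (((2:ℝ) • M).charpoly).map (algebraMap ℝ ℂ) :=
    Matrix.charpoly_map _ _
  have hpolyeq : (∏ p : Fin d × Fin 2, (X - C (((2 * hMherm.eigenvalues p : ℝ) : ℂ))))
      = (∏ i, (X - C ((hQherm.eigenvalues i : ℂ)))) * (∏ i, (X - C ((hQherm.eigenvalues i : ℂ)))) := by
    rw [← hcharQ, ← hcharN, hmapchar, hchar2M, Polynomial.map_prod]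
    simp [Polynomial.map_sub, Polynomial.map_X, Polynomial.map_C]
  have hmonQ : (∏ i, ((X : ℂ[X]) - C ((hQherm.eigenvalues i : ℂ)))).Monic :=
    monic_prod_of_monic _ _ fun i _ => monic_X_sub_C _
  have key : (Multiset.map (fun p => ((2 * hMherm.eigenvalues p : ℝ) : ℂ)) Finset.univ.val)
      = Multiset.map (fun i => ((hQherm.eigenvalues i : ℝ) : ℂ)) Finset.univ.val
        + Multiset.map (fun i => ((hQherm.eigenvalues i : ℝ) : ℂ)) Finset.univ.val := by
    have hroots := congrArg Polynomial.roots hpolyeq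
    rw [Polynomial.roots_mul (mul_ne_zero hmonQ.ne_zero hmonQ.ne_zero)] at hroots
    calc Multiset.map (fun p => ((2 * hMherm.eigenvalues p : ℝ) : ℂ)) Finset.univ.val
        = (Multiset.map (fun a : ℂ => X - C a)
            (Multiset.map (fun p => ((2 * hMherm.eigenvalues p : ℝ) : ℂ))
              Finset.univ.val)).prod.roots := by
          rw [Polynomial.roots_multiset_prod_X_sub_C]
      _ = (∏ p : Fin d × Fin 2, (X - C (((2 * hMherm.eigenvalues p : ℝ) : ℂ)))).roots := by
          rw [Finset.prod_eq_multiset_prod, Multiset.map_map]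
          rfl
      _ = _ := by
          have hroots2 : (∏ i, ((X:ℂ[X]) - C ((hQherm.eigenvalues i : ℂ)))).roots
              = Multiset.map (fun i => ((hQherm.eigenvalues i : ℝ) : ℂ)) Finset.univ.val := by
            rw [Finset.prod_eq_multiset_prod]
            have hmm : Multiset.map (fun i => (X:ℂ[X]) - C ((hQherm.eigenvalues i : ℂ))) Finset.univ.val
                = Multiset.map (fun a : ℂ => X - C a)
                    (Multiset.map (fun i => ((hQherm.eigenvalues i : ℝ) : ℂ)) Finset.univ.val) := by
              rw [Multiset.map_map]
              rfl
            rw [hmm, Polynomial.roots_multiset_prod_X_sub_C]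
          rw [hroots, hroots2]
  have E : Multiset.map (fun p => 2 * hMherm.eigenvalues p) Finset.univ.val
      = Multiset.map hQherm.eigenvalues Finset.univ.val
        + Multiset.map hQherm.eigenvalues Finset.univ.val := by
    apply Multiset.map_injective Complex.ofReal_injective
    simpa [Multiset.map_map, Function.comp_def] using key
  have count : ∀ (P : ℝ → Prop) (_ : DecidablePred P), (∀ x, P (2*x) ↔ P x) →
      (Finset.univ.filter (fun p => P (hMherm.eigenvalues p))).card
        = 2 * (Finset.univ.filter (fun i => P (hQherm.eigenvalues i))).card := by
    intro P instP hP
    have hMcount : (Finset.univ.filter (fun p => P (hMherm.eigenvalues p))).card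
        = Multiset.countP P (Multiset.map (fun p => 2 * hMherm.eigenvalues p) Finset.univ.val) := by
      rw [Multiset.countP_map, Finset.card, Finset.filter_val]
      congr 1
      apply Multiset.filter_congr
      exact fun x _ => (hP _).symm
    have hQcount : (Finset.univ.filter (fun i => P (hQherm.eigenvalues i))).card
        = Multiset.countP P (Multiset.map hQherm.eigenvalues Finset.univ.val) := by
      rw [Multiset.countP_map, Finset.card, Finset.filter_val]
    rw [hMcount, E, Multiset.countP_add, hQcount, two_mul]
  -- kernel correspondence
  have hbq : ∀ q, b.equivFun.symm (Pi.single q 1) = b q := by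
    intro q
    rw [b.equivFun_symm_apply]
    simp [Pi.single_apply]
  have key2 : ∀ x y : (Fin d × Fin 2) → ℝ,
      f (b.equivFun.symm x) (b.equivFun.symm y) = x ⬝ᵥ (M *ᵥ y) := by
    intro x y
    rw [b.equivFun_symm_apply, b.equivFun_symm_apply, map_sum]
    simp only [LinearMap.sum_apply, _root_.map_smul, LinearMap.smul_apply, map_sum, smul_eq_mul]
    simp only [dotProduct, mulVec, Finset.mul_sum]
    rw [Finset.sum_comm]
    refine Finset.sum_congr rfl fun p _ => Finset.sum_congr rfl fun q _ => ?_
    rw [hM]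
    ring
  have hfx : ∀ (x : (Fin d × Fin 2) → ℝ) q, f (b.equivFun.symm x) (b q) = (M *ᵥ x) q := by
    intro x q
    rw [← hbq q, key2]
    simp only [dotProduct, mulVec, Pi.single_apply, mul_ite, mul_one, mul_zero, Finset.mul_sum]
    rw [Finset.sum_congr rfl (fun p _ => Finset.sum_ite_eq' Finset.univ q (fun j => x p * M p j))]
    simp only [Finset.mem_univ, if_true]
    exact Finset.sum_congr rfl fun p _ => by rw [hMsymm]; ring
  have hker : Submodule.map (b.equivFun : V →ₗ[ℝ] (Fin d × Fin 2 → ℝ)) (LinearMap.ker f)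
      = LinearMap.ker M.mulVecLin := by
    ext x
    rw [Submodule.mem_map_equiv, LinearMap.mem_ker, LinearMap.mem_ker]
    constructor
    · intro h0
      rw [Matrix.mulVecLin_apply]
      funext q
      rw [← hfx x q, h0]
      simp
    · intro h0
      apply b.ext
      intro q
      rw [hfx x q, ← Matrix.mulVecLin_apply, h0]
      simp
  have hfrk : Module.finrank ℝ (LinearMap.ker f)
      = Module.finrank ℝ (LinearMap.ker M.mulVecLin) := by
    rw [← hker]
    exact (LinearEquiv.finrank_map_eq b.equivFun _).symm
  have hrankM : M.rank = (Finset.univ.filter (fun p => hMherm.eigenvalues p ≠ 0)).card := by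
    rw [hMherm.rank_eq_card_non_zero_eigs, Fintype.card_subtype]
  have hrankQ : Q.rank = (Finset.univ.filter (fun i => hQherm.eigenvalues i ≠ 0)).card := by
    rw [hQherm.rank_eq_card_non_zero_eigs, Fintype.card_subtype]
  have hcount0 := count (fun x => x ≠ 0) inferInstance (fun x => by
    constructor
    · intro h hx
      exact h (by rw [hx, mul_zero])
    · intro h hx
      rcases mul_eq_zero.mp hx with h' | h'
      · norm_num at h'
      · exact h h')
  have hrank2 : M.rank = 2 * Q.rank := by rw [hrankM, hrankQ]; exact hcount0
  have hrnM : M.rank + Module.finrank ℝ (LinearMap.ker M.mulVecLin) = 2 * d := by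
    have h := LinearMap.finrank_range_add_finrank_ker M.mulVecLin
    rw [Matrix.rank]
    rw [h]
    simp [Module.finrank_fintype_fun_eq_card, mul_comm]
  have hrnQ : Q.rank + Module.finrank ℂ (LinearMap.ker Q.mulVecLin) = d := by
    have h := LinearMap.finrank_range_add_finrank_ker Q.mulVecLin
    rw [Matrix.rank]
    rw [h]
    simp [Module.finrank_fintype_fun_eq_card]
  -- positive definiteness
  have hMposdef : (∀ v : V, v ≠ 0 → 0 < f v v) ↔ M.PosDef := by
    constructor
    · intro h
      refine Matrix.PosDef.of_dotProduct_mulVec_pos hMherm fun x hx => ?_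
      have hv : b.equivFun.symm x ≠ 0 := by
        simp only [ne_eq, LinearEquiv.map_eq_zero_iff]
        exact hx
      have h3 := h _ hv
      rw [key2] at h3
      simpa using h3
    · intro hP v hv
      have hx : b.equivFun v ≠ 0 := by
        simp only [ne_eq, LinearEquiv.map_eq_zero_iff]
        exact hv
      have h3 := hP.dotProduct_mulVec_pos hx
      have hvv : f v v = (b.equivFun v) ⬝ᵥ (M *ᵥ (b.equivFun v)) := by
        conv_lhs => rw [← b.equivFun.symm_apply_apply v]
        rw [key2]
      rw [hvv]
      simpa using h3
  have hposM := count (fun x => 0 < x) inferInstance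
    (fun x => by constructor <;> intro h <;> linarith)
  have hcard2d : Fintype.card (Fin d × Fin 2) = 2 * d := by
    simp [Fintype.card_prod, mul_comm]
  have hiff : M.PosDef ↔ Q.PosDef := by
    rw [aux_posDef_iff hMherm, aux_posDef_iff hQherm]
    constructor
    · intro h i
      have hMcard : (Finset.univ.filter (fun p => 0 < hMherm.eigenvalues p)).card
          = 2 * d := by
        rw [Finset.filter_true_of_mem (fun p _ => h p), Finset.card_univ, hcard2d]
      have hposM' : (Finset.univ.filter (fun p => 0 < hMherm.eigenvalues p)).card
          = 2 * (Finset.univ.filter (fun i => 0 < hQherm.eigenvalues i)).card := hposM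
      have hQcard : (Finset.univ.filter (fun i => 0 < hQherm.eigenvalues i)).card = d := by
        omega
      have huniv : Finset.univ.filter (fun i => 0 < hQherm.eigenvalues i) = Finset.univ :=
        Finset.eq_univ_of_card _ (by rw [hQcard, Fintype.card_fin])
      have hmem : i ∈ Finset.univ.filter (fun i => 0 < hQherm.eigenvalues i) := by
        rw [huniv]; exact Finset.mem_univ i
      exact (Finset.mem_filter.mp hmem).2
    · intro h p
      have hQcard : (Finset.univ.filter (fun i => 0 < hQherm.eigenvalues i)).card = d := by
        rw [Finset.filter_true_of_mem (fun i _ => h i), Finset.card_univ, Fintype.card_fin]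
      have hposM' : (Finset.univ.filter (fun p => 0 < hMherm.eigenvalues p)).card
          = 2 * (Finset.univ.filter (fun i => 0 < hQherm.eigenvalues i)).card := hposM
      have hMcard : (Finset.univ.filter (fun p => 0 < hMherm.eigenvalues p)).card = 2 * d := by
        omega
      have huniv : Finset.univ.filter (fun p => 0 < hMherm.eigenvalues p) = Finset.univ :=
        Finset.eq_univ_of_card _ (by rw [hMcard, hcard2d])
      have hmem : p ∈ Finset.univ.filter (fun p => 0 < hMherm.eigenvalues p) := by
        rw [huniv]; exact Finset.mem_univ p
      exact (Finset.mem_filter.mp hmem).2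
  refine ⟨hQherm, ?_, ?_, hMposdef.trans hiff⟩
  · intro hMh hQh
    exact ⟨count (fun x => 0 < x) inferInstance
        (fun x => by constructor <;> intro h <;> linarith),
      count (fun x => x < 0) inferInstance
        (fun x => by constructor <;> intro h <;> linarith)⟩
  · have hcount0' : (Finset.univ.filter (fun p => hMherm.eigenvalues p ≠ 0)).card
        = 2 * (Finset.univ.filter (fun i => hQherm.eigenvalues i ≠ 0)).card := hcount0
    rw [hfrk]
    omega
end

section
/- With f, the basis {α_j, β_j}, and the Hermitian matrix Q as in the complexification lemma, define ψ : V → ℂ^d (as a real-linear isomorphism) by ψ(α_j) = e_j and ψ(β_j) = −i e_j. Then for all w₁, w₂ ∈ V, f(w₁, w₂) = (1/2)·Re( ψ(w₁)* Q ψ(w₂) ), where * denotes conjugate transpose. -/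
open Matrix

theorem stmt4 (d : ℕ) (V : Type*) [AddCommGroup V] [Module ℝ V]
    (b : Module.Basis (Fin d × Fin 2) ℝ V)
    (f : LinearMap.BilinForm ℝ V) (hsymm : ∀ x y, f x y = f y x)
    (h1 : ∀ j k : Fin d, f (b (j, 0)) (b (k, 0)) = f (b (j, 1)) (b (k, 1)))
    (h2 : ∀ j k : Fin d, f (b (j, 0)) (b (k, 1)) = - f (b (k, 0)) (b (j, 1)))
    (Q : Matrix (Fin d) (Fin d) ℂ)
    (hQ : ∀ j k : Fin d, Q j k =
      ((f (b (j, 0)) (b (k, 0)) + f (b (j, 1)) (b (k, 1)) : ℝ) : ℂ)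
        + Complex.I * ((f (b (j, 0)) (b (k, 1)) - f (b (j, 1)) (b (k, 0)) : ℝ) : ℂ))
    (ψ : V →ₗ[ℝ] (Fin d → ℂ))
    (hψα : ∀ j : Fin d, ψ (b (j, 0)) = Pi.single j (1 : ℂ))
    (hψβ : ∀ j : Fin d, ψ (b (j, 1)) = Pi.single j (-Complex.I)) :
    ∀ w₁ w₂ : V,
      f w₁ w₂ = (1 / 2 : ℝ) * (dotProduct (star (ψ w₁)) (Q.mulVec (ψ w₂))).re := by
  let g : V →ₗ[ℝ] V →ₗ[ℝ] ℝ := LinearMap.mk₂ ℝ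
    (fun w₁ w₂ => (1 / 2 : ℝ) * (dotProduct (star (ψ w₁)) (Q.mulVec (ψ w₂))).re)
    (by intro x y z; simp [star_add, add_dotProduct]; ring)
    (by intro r x y
        simp [_root_.map_smul, star_smul, smul_dotProduct, Complex.real_smul, Complex.mul_re]
        ring)
    (by intro x y z; simp [mulVec_add, dotProduct_add]; ring)
    (by intro r x y
        simp [_root_.map_smul, mulVec_smul, dotProduct_smul, Complex.real_smul, Complex.mul_re]
        ring)
  suffices h : f = g by intro w₁ w₂; rw [h]; rfl
  apply LinearMap.ext_basis b b
  intro p q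
  obtain ⟨j, s⟩ := p
  obtain ⟨k, t⟩ := q
  have key : ∀ (c₁ c₂ : ℂ), dotProduct (star (Pi.single j c₁)) (Q.mulVec (Pi.single k c₂))
      = star c₁ * (Q j k * c₂) := by
    intro c₁ c₂
    simp [dotProduct, Matrix.mulVec, Pi.single_apply, apply_ite, Finset.mul_sum,
      mul_comm, mul_assoc]
  have e1 : f (b (j, 1)) (b (k, 0)) = - f (b (j, 0)) (b (k, 1)) := by
    rw [hsymm (b (j, 1)) (b (k, 0)), h2 k j]
  fin_cases s <;> fin_cases t <;>
    simp only [Fin.mk_zero, Fin.mk_one, Fin.isValue] <;>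
    simp only [g, LinearMap.mk₂_apply, hψα, hψβ, key, hQ] <;>
    simp [Complex.add_re, Complex.mul_re, Complex.mul_im] <;>
    linarith [h1 j k, e1]
end

section
/- Let Q₁(z) be the 3×3 real symmetric matrix with entries Q₁(1,1) = 25z² + 5, Q₁(1,2) = −(5/2)(z(5z+2)+5), Q₁(1,3) = (5/2)(z(5z−2)+5), Q₁(2,2) = 25(4−3z)z + 65, Q₁(2,3) = (5/2)(1−5z²), Q₁(3,3) = 65 − 25z(3z+4). Then Q₁(z) is positive definite for all z with 0 < |z| < √((43 − 4√109)/35). -/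
open Matrix

/-- The real symmetric block `Q₁` for the `N = 7` ring relative equilibrium. -/
noncomputable def Q1 (z : ℝ) : Matrix (Fin 3) (Fin 3) ℝ :=
  !![25 * z ^ 2 + 5, -(5 / 2) * (z * (5 * z + 2) + 5), (5 / 2) * (z * (5 * z - 2) + 5);
     -(5 / 2) * (z * (5 * z + 2) + 5), 25 * (4 - 3 * z) * z + 65, (5 / 2) * (1 - 5 * z ^ 2);
     (5 / 2) * (z * (5 * z - 2) + 5), (5 / 2) * (1 - 5 * z ^ 2), 65 - 25 * z * (3 * z + 4)]

set_option maxHeartbeats 1000000 in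
private lemma aux (z a b c : ℝ) (hz : 0 < z ^ 2)
    (hq : 0 < 35 * z ^ 2 * z ^ 2 - 86 * z ^ 2 + 3) (hzb : z ^ 2 < 1 / 25)
    (hx : a ≠ 0 ∨ b ≠ 0 ∨ c ≠ 0) :
    0 < (25 * z ^ 2 + 5) * a ^ 2 - 5 * (z * (5 * z + 2) + 5) * a * b
      + 5 * (z * (5 * z - 2) + 5) * a * c
      + (25 * (4 - 3 * z) * z + 65) * b ^ 2 + 5 * (1 - 5 * z ^ 2) * b * c
      + (65 - 25 * z * (3 * z + 4)) * c ^ 2 := by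
  have h5a : -(1 / 5 : ℝ) < z := by nlinarith
  have h5b : z < (1 / 5 : ℝ) := by nlinarith
  have hq11 : 0 < 25 * z ^ 2 + 5 := by positivity
  have hm2 : 0 < 675 / 4 + 375 * z + 1825 / 2 * z ^ 2 + 2375 * z ^ 3 - 8125 / 4 * z ^ 4 := by
    nlinarith [sq_nonneg z, sq_nonneg (z * z), mul_pos (by linarith : (0:ℝ) < 1/5 + z)
      (by linarith : (0:ℝ) < 1/5 - z)]
  have hdet : 0 < 28125 / 2 * z ^ 2 - 403125 * z ^ 4 + 328125 / 2 * z ^ 6 := by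
    nlinarith [mul_pos hz hq]
  have key : (25 * z ^ 2 + 5) *
      (675 / 4 + 375 * z + 1825 / 2 * z ^ 2 + 2375 * z ^ 3 - 8125 / 4 * z ^ 4) *
      ((25 * z ^ 2 + 5) * a ^ 2 - 5 * (z * (5 * z + 2) + 5) * a * b
        + 5 * (z * (5 * z - 2) + 5) * a * c
        + (25 * (4 - 3 * z) * z + 65) * b ^ 2 + 5 * (1 - 5 * z ^ 2) * b * c
        + (65 - 25 * z * (3 * z + 4)) * c ^ 2)
      = (675 / 4 + 375 * z + 1825 / 2 * z ^ 2 + 2375 * z ^ 3 - 8125 / 4 * z ^ 4) *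
          ((25 * z ^ 2 + 5) * a + (-(25 / 2) - 5 * z - 25 / 2 * z ^ 2) * b
            + (25 / 2 - 5 * z + 25 / 2 * z ^ 2) * c) ^ 2
        + ((675 / 4 + 375 * z + 1825 / 2 * z ^ 2 + 2375 * z ^ 3 - 8125 / 4 * z ^ 4) * b
            + (675 / 4 + 575 / 2 * z ^ 2 - 625 / 4 * z ^ 4) * c) ^ 2
        + (25 * z ^ 2 + 5) * (28125 / 2 * z ^ 2 - 403125 * z ^ 4 + 328125 / 2 * z ^ 6) * c ^ 2 := by
    ring
  rcases eq_or_ne c 0 with hc | hc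
  · subst hc
    rcases eq_or_ne b 0 with hb | hb
    · subst hb
      have ha : a ≠ 0 := by tauto
      have ha2 : 0 < a ^ 2 := by rcases ha.lt_or_gt with h | h <;> nlinarith
      nlinarith [mul_pos hq11 ha2]
    · have hb2 : 0 < b ^ 2 := by rcases hb.lt_or_gt with h | h <;> nlinarith
      nlinarith [key, mul_pos hq11 hm2,
        mul_nonneg hm2.le (sq_nonneg ((25 * z ^ 2 + 5) * a
          + (-(25 / 2) - 5 * z - 25 / 2 * z ^ 2) * b + (25 / 2 - 5 * z + 25 / 2 * z ^ 2) * 0)),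
        mul_pos (mul_pos hm2 hm2) hb2]
  · have hc2 : 0 < c ^ 2 := by rcases hc.lt_or_gt with h | h <;> nlinarith
    nlinarith [key, mul_pos hq11 hm2,
      mul_nonneg hm2.le (sq_nonneg ((25 * z ^ 2 + 5) * a
        + (-(25 / 2) - 5 * z - 25 / 2 * z ^ 2) * b + (25 / 2 - 5 * z + 25 / 2 * z ^ 2) * c)),
      sq_nonneg ((675 / 4 + 375 * z + 1825 / 2 * z ^ 2 + 2375 * z ^ 3 - 8125 / 4 * z ^ 4) * b
        + (675 / 4 + 575 / 2 * z ^ 2 - 625 / 4 * z ^ 4) * c),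
      mul_pos (mul_pos hq11 hdet) hc2]

theorem stmt6 (z : ℝ) (h0 : 0 < |z|)
    (h1 : |z| < Real.sqrt ((43 - 4 * Real.sqrt 109) / 35)) :
    (Q1 z).PosDef := by
  have hs0 : (0:ℝ) ≤ Real.sqrt 109 := Real.sqrt_nonneg _
  have hs : Real.sqrt 109 ^ 2 = 109 := Real.sq_sqrt (by norm_num)
  have hs1 : (52 / 5 : ℝ) < Real.sqrt 109 := by nlinarith
  have hupos : 0 < Real.sqrt ((43 - 4 * Real.sqrt 109) / 35) := h0.trans h1
  have hu : 0 < (43 - 4 * Real.sqrt 109) / 35 := Real.sqrt_pos.mp hupos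
  have h2 : Real.sqrt ((43 - 4 * Real.sqrt 109) / 35) ^ 2 = (43 - 4 * Real.sqrt 109) / 35 :=
    Real.sq_sqrt hu.le
  have hz2 : z ^ 2 < (43 - 4 * Real.sqrt 109) / 35 := by
    nlinarith [h1, abs_nonneg z, h2, sq_abs z]
  have hA : 0 < 43 - 35 * z ^ 2 - 4 * Real.sqrt 109 := by linarith
  have hB : 0 < 43 - 35 * z ^ 2 + 4 * Real.sqrt 109 := by linarith
  have hq : 0 < 35 * z ^ 2 * z ^ 2 - 86 * z ^ 2 + 3 := by nlinarith [mul_pos hA hB]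
  have hzb : z ^ 2 < 1 / 25 := by linarith
  have hz : 0 < z ^ 2 := by nlinarith [mul_pos h0 h0, abs_mul_abs_self z]
  refine Matrix.PosDef.of_dotProduct_mulVec_pos ?_ ?_
  · ext i j
    fin_cases i <;> fin_cases j <;> simp [Q1, Matrix.conjTranspose_apply]
  · intro x hx
    have hx' : x 0 ≠ 0 ∨ x 1 ≠ 0 ∨ x 2 ≠ 0 := by
      by_contra h
      push_neg at h
      exact hx (funext fun i => by fin_cases i <;> simp [h.1, h.2.1, h.2.2])
    have hdp : dotProduct (star x) (Q1 z *ᵥ x) = (25 * z ^ 2 + 5) * x 0 ^ 2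
        - 5 * (z * (5 * z + 2) + 5) * x 0 * x 1 + 5 * (z * (5 * z - 2) + 5) * x 0 * x 2
        + (25 * (4 - 3 * z) * z + 65) * x 1 ^ 2 + 5 * (1 - 5 * z ^ 2) * x 1 * x 2
        + (65 - 25 * z * (3 * z + 4)) * x 2 ^ 2 := by
      simp [Q1, dotProduct, mulVec, Fin.sum_univ_three]
      ring
    rw [hdp]
    exact aux z (x 0) (x 1) (x 2) hz hq hzb hx'
end

section
/- Let N ≥ 1 and H(v) = −∑_{i<j} ln ‖v_i − v_j‖² for distinct points v₁, …, v_N on the unit sphere. Then H is conserved along any solution of the N-vortex equations v̇_j = ∑_{i ≠ j} (v_i × v_j)/‖v_i − v_j‖². -/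
open Finset

noncomputable section

def toV (x : EuclideanSpace ℝ (Fin 3)) : Fin 3 → ℝ := EuclideanSpace.equiv (Fin 3) ℝ x

def ofV (v : Fin 3 → ℝ) : EuclideanSpace ℝ (Fin 3) := (EuclideanSpace.equiv (Fin 3) ℝ).symm v

/-- The cross product on Euclidean 3-space. -/
def cross3 (a b : EuclideanSpace ℝ (Fin 3)) : EuclideanSpace ℝ (Fin 3) :=
  ofV ![toV a 1 * toV b 2 - toV a 2 * toV b 1,
        toV a 2 * toV b 0 - toV a 0 * toV b 2,
        toV a 0 * toV b 1 - toV a 1 * toV b 0]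

/-- The vortex Hamiltonian `H(v) = −∑_{i<j} ln ‖v_i − v_j‖²`. -/
def vortexH (N : ℕ) (v : Fin N → EuclideanSpace ℝ (Fin 3)) : ℝ :=
  -∑ p ∈ Finset.univ.filter (fun p : Fin N × Fin N => p.1 < p.2),
      Real.log (‖v p.1 - v p.2‖ ^ 2)


open RealInnerProductSpace

abbrev E3 := EuclideanSpace ℝ (Fin 3)

lemma triple_antisymm (a b c : E3) : ⟪a, cross3 b c⟫ = -⟪b, cross3 a c⟫ := by
  simp [cross3, toV, ofV, PiLp.inner_apply, Fin.sum_univ_three]; ring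

lemma inner_cross_right_self (a b : E3) : ⟪a, cross3 b a⟫ = 0 := by
  simp [cross3, toV, ofV, PiLp.inner_apply, Fin.sum_univ_three]; ring

lemma inner_cross_left_self (a b : E3) : ⟪a, cross3 a b⟫ = 0 := by
  simp [cross3, toV, ofV, PiLp.inner_apply, Fin.sum_univ_three]; ring

lemma key (N : ℕ) (u w : Fin N → E3)
    (hw : ∀ j, w j = ∑ i ∈ Finset.univ.erase j, (‖u i - u j‖ ^ 2)⁻¹ • cross3 (u i) (u j)) :
    ∑ p ∈ Finset.univ.filter (fun p : Fin N × Fin N => p.1 < p.2),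
      (⟪u p.1 - u p.2, w p.1 - w p.2⟫ + ⟪w p.1 - w p.2, u p.1 - u p.2⟫) / ‖u p.1 - u p.2‖ ^ 2
      = 0 := by
  set f : Fin N → Fin N → ℝ := fun i j => (‖u i - u j‖ ^ 2)⁻¹ with hf
  have fsymm : ∀ i j, f i j = f j i := by
    intro i j; simp only [hf]; rw [norm_sub_rev]
  set A : Fin N → Fin N → ℝ := fun p q => f p q * ⟪w p, u q⟫ with hA
  have hself : ∀ p : Fin N, ⟪w p, u p⟫ = 0 := by
    intro p
    rw [hw, sum_inner]
    refine Finset.sum_eq_zero fun i _ => ?_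
    rw [real_inner_smul_left, real_inner_comm, inner_cross_right_self, mul_zero]
  have hterm : ∀ p q : Fin N,
      (⟪u p - u q, w p - w q⟫ + ⟪w p - w q, u p - u q⟫) / ‖u p - u q‖ ^ 2
        = -2 * (A p q + A q p) := by
    intro p q
    rw [real_inner_comm (u p - u q)]
    have h1 : ⟪u p, w p⟫ = 0 := by rw [real_inner_comm]; exact hself p
    have h2 : ⟪u q, w q⟫ = 0 := by rw [real_inner_comm]; exact hself q
    simp only [inner_sub_left, inner_sub_right, h1, h2, hA]
    rw [div_eq_mul_inv]
    have hfq : (‖u p - u q‖ ^ 2)⁻¹ = f p q := rfl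
    rw [hfq, real_inner_comm (u q) (w p), real_inner_comm (u p) (w q), fsymm p q]
    first
      | ring
      | (ring_nf; simp [hself])
  simp only [hterm]
  rw [← Finset.mul_sum]
  suffices h : ∑ p ∈ Finset.univ.filter (fun p : Fin N × Fin N => p.1 < p.2),
      (A p.1 p.2 + A p.2 p.1) = 0 by rw [h, mul_zero]
  have hsplit : ∑ p ∈ Finset.univ.filter (fun p : Fin N × Fin N => p.1 ≠ p.2), A p.1 p.2
      = ∑ p ∈ Finset.univ.filter (fun p : Fin N × Fin N => p.1 < p.2), (A p.1 p.2 + A p.2 p.1) := by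
    have hun : Finset.univ.filter (fun p : Fin N × Fin N => p.1 ≠ p.2)
        = (Finset.univ.filter (fun p : Fin N × Fin N => p.1 < p.2))
          ∪ (Finset.univ.filter (fun p : Fin N × Fin N => p.2 < p.1)) := by
      rw [← Finset.filter_or]
      apply Finset.filter_congr
      intro p _
      exact ⟨fun h => h.lt_or_gt, fun h => h.elim ne_of_lt (fun h' => (ne_of_lt h').symm)⟩
    rw [hun, Finset.sum_union, Finset.sum_add_distrib]
    · congr 1
      refine Finset.sum_nbij' (fun p => Prod.swap p) (fun p => Prod.swap p) ?_ ?_ ?_ ?_ ?_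
      · intro p hp; simp only [Finset.mem_filter, Finset.mem_univ, true_and] at hp ⊢
        exact hp
      · intro p hp; simp only [Finset.mem_filter, Finset.mem_univ, true_and] at hp ⊢
        exact hp
      · intro p _; simp
      · intro p _; simp
      · intro p _; rfl
    · rw [Finset.disjoint_filter]
      intro p _ h1 h2
      exact absurd h2 (not_lt_of_gt h1)
  rw [← hsplit]
  have hAexp : ∀ p q : Fin N, A p q
      = ∑ i ∈ Finset.univ.erase p, f p q * (f i p * ⟪cross3 (u i) (u p), u q⟫) := by
    intro p q
    rw [hA]
    simp only
    rw [hw, sum_inner, Finset.mul_sum]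
    refine Finset.sum_congr rfl fun i _ => ?_
    rw [real_inner_smul_left, hf]
  simp only [hAexp]
  rw [Finset.sum_sigma']
  refine Finset.sum_involution
    (fun a _ => ⟨(a.1.1, a.2), a.1.2⟩) ?_ ?_ ?_ ?_
  · rintro ⟨⟨p, q⟩, i⟩ ha
    simp only
    rw [real_inner_comm (u q) (cross3 (u i) (u p)), real_inner_comm (u i) (cross3 (u q) (u p)),
      triple_antisymm (u q) (u i) (u p), fsymm q p, fsymm i p]
    ring
  · rintro ⟨⟨p, q⟩, i⟩ ha hne
    intro h
    apply hne
    have hiq : i = q := by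
      have := congrArg (fun a : (Σ _ : Fin N × Fin N, Fin N) => a.1.2) h
      simpa using this
    subst hiq
    rw [real_inner_comm, inner_cross_left_self, mul_zero, mul_zero]
  · rintro ⟨⟨p, q⟩, i⟩ ha
    rw [Finset.mem_sigma, Finset.mem_filter, Finset.mem_erase] at ha
    rw [Finset.mem_sigma, Finset.mem_filter, Finset.mem_erase]
    obtain ⟨⟨_, hpq⟩, hip, _⟩ := ha
    exact ⟨⟨Finset.mem_univ _, fun h => hip h.symm⟩, fun h => hpq h.symm, Finset.mem_univ _⟩
  · rintro ⟨⟨p, q⟩, i⟩ ha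
    rfl

/-- The Hamiltonian is conserved along solutions of the `N`-vortex equations. -/
theorem stmt9 (N : ℕ) (hN : 1 ≤ N) (v : ℝ → Fin N → EuclideanSpace ℝ (Fin 3))
    (hsph : ∀ t j, ‖v t j‖ = 1)
    (hcol : ∀ t, ∀ i j, i ≠ j → v t i ≠ v t j)
    (hode : ∀ t j, HasDerivAt (fun s => v s j)
      (∑ i ∈ Finset.univ.erase j,
        (‖v t i - v t j‖ ^ 2)⁻¹ • cross3 (v t i) (v t j)) t) :
    ∀ t s : ℝ, vortexH N (v t) = vortexH N (v s) := by
  have hF : ∀ t : ℝ, HasDerivAt (fun s => vortexH N (v s)) 0 t := by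
    intro t
    set w : Fin N → E3 := fun j => ∑ i ∈ Finset.univ.erase j,
        (‖v t i - v t j‖ ^ 2)⁻¹ • cross3 (v t i) (v t j) with hwdef
    have hlog : ∀ p ∈ Finset.univ.filter (fun p : Fin N × Fin N => p.1 < p.2),
        HasDerivAt (fun s => Real.log (‖v s p.1 - v s p.2‖ ^ 2))
          ((⟪v t p.1 - v t p.2, w p.1 - w p.2⟫ + ⟪w p.1 - w p.2, v t p.1 - v t p.2⟫)
            / ‖v t p.1 - v t p.2‖ ^ 2) t := by
      intro p hp
      rw [Finset.mem_filter] at hp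
      have hd : HasDerivAt (fun s => v s p.1 - v s p.2) (w p.1 - w p.2) t :=
        (hode t p.1).sub (hode t p.2)
      have hinner := HasDerivAt.inner ℝ hd hd
      have heq : (fun s => Real.log (‖v s p.1 - v s p.2‖ ^ 2))
          = fun s => Real.log ⟪v s p.1 - v s p.2, v s p.1 - v s p.2⟫ := by
        funext s; rw [real_inner_self_eq_norm_sq]
      have hne : ⟪v t p.1 - v t p.2, v t p.1 - v t p.2⟫ ≠ 0 := by
        rw [real_inner_self_eq_norm_sq]
        have := hcol t p.1 p.2 (ne_of_lt hp.2)
        exact pow_ne_zero 2 (norm_ne_zero_iff.mpr (sub_ne_zero.mpr this))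
      rw [heq]
      have := hinner.log hne
      rwa [real_inner_self_eq_norm_sq] at this
    have hsum := HasDerivAt.fun_sum hlog
    have hzero := key N (v t) w (fun j => rfl)
    have := hsum.fun_neg
    rw [hzero, neg_zero] at this
    exact this
  intro t s
  exact is_const_of_deriv_eq_zero
    (fun x => (hF x).differentiableAt) (fun x => (hF x).deriv) t s

end
end

section
/- Let a = (a₁, …, a_N) with distinct points on S², ω ∈ ℝ, and suppose v(t) = (e^{ωJ₃t}a₁, …, e^{ωJ₃t}a_N) is a solution of the N-vortex equations v̇_j = ∑_{i ≠ j} (v_i × v_j)/‖v_i − v_j‖² with ω ≠ 0. Then e₃ × Φ(a) = 0, i.e. the center of vorticity Φ(a) = a₁ + ⋯ + a_N is parallel to the vertical axis e₃ = (0,0,1). -/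
open Finset Real

noncomputable section

/-- Rotation by angle `θ` about the vertical axis, i.e. `e^{θ J₃}`. -/
def rotZ (θ : ℝ) (x : EuclideanSpace ℝ (Fin 3)) : EuclideanSpace ℝ (Fin 3) :=
  ofV ((!![Real.cos θ, -Real.sin θ, 0; Real.sin θ, Real.cos θ, 0; 0, 0, 1]).mulVec (toV x))

lemma toV_inj {x y : EuclideanSpace ℝ (Fin 3)} (h : toV x = toV y) : x = y :=
  (EuclideanSpace.equiv (Fin 3) ℝ).injective h

lemma toV_cross3 (u v : EuclideanSpace ℝ (Fin 3)) :
    toV (cross3 u v) = ![toV u 1 * toV v 2 - toV u 2 * toV v 1,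
      toV u 2 * toV v 0 - toV u 0 * toV v 2,
      toV u 0 * toV v 1 - toV u 1 * toV v 0] := rfl

lemma toV_add (x y : EuclideanSpace ℝ (Fin 3)) : toV (x + y) = toV x + toV y := rfl
lemma toV_smul (c : ℝ) (x : EuclideanSpace ℝ (Fin 3)) : toV (c • x) = c • toV x := rfl
lemma toV_neg (x : EuclideanSpace ℝ (Fin 3)) : toV (-x) = -toV x := rfl
lemma toV_zero : toV (0 : EuclideanSpace ℝ (Fin 3)) = 0 := rfl
lemma toV_ofV (v : Fin 3 → ℝ) : toV (ofV v) = v := rfl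

lemma cross3_swap (x y : EuclideanSpace ℝ (Fin 3)) : cross3 x y = -cross3 y x := by
  apply toV_inj
  rw [toV_neg, toV_cross3, toV_cross3]
  funext i
  fin_cases i <;> simp <;> ring

/-- `cross3 u` bundled as a linear map in the second variable. -/
def crossLM (u : EuclideanSpace ℝ (Fin 3)) :
    EuclideanSpace ℝ (Fin 3) →ₗ[ℝ] EuclideanSpace ℝ (Fin 3) where
  toFun := cross3 u
  map_add' x y := by
    apply toV_inj
    rw [toV_add, toV_cross3, toV_cross3, toV_cross3, toV_add]
    funext i
    fin_cases i <;> simp <;> ring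
  map_smul' c x := by
    apply toV_inj
    rw [RingHom.id_apply, toV_smul, toV_cross3, toV_cross3, toV_smul]
    funext i
    fin_cases i <;> simp <;> ring

lemma rotZ_zero (x : EuclideanSpace ℝ (Fin 3)) : rotZ 0 x = x := by
  show ofV _ = x
  have h : (!![Real.cos 0, -Real.sin 0, 0; Real.sin 0, Real.cos 0, 0; 0, 0, 1]).mulVec (toV x)
      = toV x := by
    funext i
    fin_cases i <;> simp [Matrix.mulVec, dotProduct, Fin.sum_univ_three]
  rw [h]; rfl

lemma hasDerivAt_rot (ω : ℝ) (x : EuclideanSpace ℝ (Fin 3)) :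
    HasDerivAt (fun s => rotZ (ω * s) x) (ω • cross3 (ofV ![0, 0, 1]) x) 0 := by
  have hg : HasDerivAt
      (fun s : ℝ => (!![Real.cos (ω*s), -Real.sin (ω*s), 0;
        Real.sin (ω*s), Real.cos (ω*s), 0; 0, 0, 1]).mulVec (toV x))
      ![-(ω * toV x 1), ω * toV x 0, 0] 0 := by
    rw [hasDerivAt_pi]
    intro i
    have hid : HasDerivAt (fun s : ℝ => ω * s) ω 0 := by
      simpa using (hasDerivAt_id (0:ℝ)).const_mul ω
    have hc : HasDerivAt (fun s : ℝ => Real.cos (ω*s)) 0 0 := by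
      simpa using hid.cos
    have hs : HasDerivAt (fun s : ℝ => Real.sin (ω*s)) ω 0 := by
      simpa using hid.sin
    fin_cases i <;>
      simp [Matrix.mulVec, dotProduct, Fin.sum_univ_three]
    · simpa [Pi.add_def, Pi.neg_def] using (hc.mul_const (toV x 0)).add ((hs.mul_const (toV x 1)).neg)
    · simpa [Pi.add_def, Pi.neg_def] using (hs.mul_const (toV x 0)).add (hc.mul_const (toV x 1))
    · exact hasDerivAt_const 0 _
  have hcomp := ((EuclideanSpace.equiv (Fin 3) ℝ).symm.toContinuousLinearMap.hasFDerivAt).comp_hasDerivAt 0 hg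
  have hval : ((EuclideanSpace.equiv (Fin 3) ℝ).symm.toContinuousLinearMap :
      (Fin 3 → ℝ) → EuclideanSpace ℝ (Fin 3)) ![-(ω * toV x 1), ω * toV x 0, 0]
      = ω • cross3 (ofV ![0, 0, 1]) x := by
    apply toV_inj
    rw [toV_smul, toV_cross3]
    funext i
    fin_cases i <;> simp [toV_ofV, toV, ofV] <;> ring
  rw [hval] at hcomp
  exact hcomp

/-- If a uniformly rotating configuration is a solution of the vortex equations with `ω ≠ 0`,
then the center of vorticity is parallel to the vertical axis `e₃`. -/
theorem stmt10 (N : ℕ) (a : Fin N → EuclideanSpace ℝ (Fin 3)) (ω : ℝ) (hω : ω ≠ 0)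
    (hsph : ∀ j, ‖a j‖ = 1) (hdist : ∀ i j, i ≠ j → a i ≠ a j)
    (hode : ∀ t j, HasDerivAt (fun s => rotZ (ω * s) (a j))
      (∑ i ∈ Finset.univ.erase j,
        (‖rotZ (ω * t) (a i) - rotZ (ω * t) (a j)‖ ^ 2)⁻¹ •
          cross3 (rotZ (ω * t) (a i)) (rotZ (ω * t) (a j))) t) :
    cross3 (ofV ![0, 0, 1]) (∑ j, a j) = 0 := by
  set F : Fin N → Fin N → EuclideanSpace ℝ (Fin 3) :=
    fun i j => (‖a i - a j‖ ^ 2)⁻¹ • cross3 (a i) (a j) with hF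
  -- From uniqueness of derivatives at t = 0:
  have key : ∀ j, ω • cross3 (ofV ![0, 0, 1]) (a j) = ∑ i ∈ Finset.univ.erase j, F i j := by
    intro j
    have h0 := hode 0 j
    simp only [mul_zero, rotZ_zero] at h0
    exact (hasDerivAt_rot ω (a j)).unique h0
  -- Antisymmetry of F:
  have hanti : ∀ i j, F i j = -F j i := by
    intro i j
    rw [hF]
    simp only
    rw [cross3_swap (a i) (a j), smul_neg, norm_sub_rev]
  -- The double sum vanishes:
  have hsum : ∑ j, ∑ i ∈ Finset.univ.erase j, F i j = 0 := by
    have hswap : ∑ j, ∑ i ∈ Finset.univ.erase j, F i j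
        = ∑ i, ∑ j ∈ Finset.univ.erase i, F i j := by
      exact Finset.sum_comm' (by intro x y; simp [Finset.mem_erase, and_comm, ne_comm, eq_comm])
    have hneg : ∑ j, ∑ i ∈ Finset.univ.erase j, F i j
        = -∑ j, ∑ i ∈ Finset.univ.erase j, F i j := by
      calc ∑ j, ∑ i ∈ Finset.univ.erase j, F i j
          = ∑ i, ∑ j ∈ Finset.univ.erase i, F i j := hswap
        _ = ∑ i, ∑ j ∈ Finset.univ.erase i, -F j i := by
              refine Finset.sum_congr rfl fun i _ => Finset.sum_congr rfl fun j _ => hanti i j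
        _ = -∑ i, ∑ j ∈ Finset.univ.erase i, F j i := by
              simp [Finset.sum_neg_distrib]
        _ = -∑ j, ∑ i ∈ Finset.univ.erase j, F i j := rfl
    have h2 : (2 : ℝ) • ∑ j, ∑ i ∈ Finset.univ.erase j, F i j = 0 := by
      rw [two_smul]
      nth_rewrite 1 [hneg]
      simp
    rcases smul_eq_zero.mp h2 with h | h
    · norm_num at h
    · exact h
  -- Sum the key identity over j:
  have hsum2 : ω • cross3 (ofV ![0, 0, 1]) (∑ j, a j) = 0 := by
    have hlin : cross3 (ofV ![0, 0, 1]) (∑ j, a j)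
        = ∑ j, cross3 (ofV ![0, 0, 1]) (a j) := map_sum (crossLM (ofV ![0, 0, 1])) a Finset.univ
    rw [hlin, Finset.smul_sum]
    rw [← hsum]
    exact Finset.sum_congr rfl fun j _ => key j
  rcases smul_eq_zero.mp hsum2 with h | h
  · exact absurd h hω
  · exact h

end
end

section
/- Let N ≥ 3 and a = (a₁, …, a_N) ∈ (S²)ᴺ with distinct entries, and let dΦ(a) : V_a → ℝ³ be the linear map dΦ(a)(w) = w₁ + ⋯ + w_N on the tangent space V_a = { w : a_j · w_j = 0 ∀j }. Then dΦ(a) is surjective, and hence ker dΦ(a) has dimension 2N − 3. -/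
open Finset
open scoped RealInnerProductSpace

noncomputable section

lemma aux_sup17 (u v : EuclideanSpace ℝ (Fin 3)) (hu : ‖u‖ = 1) (hv : ‖v‖ = 1)
    (h1 : u ≠ v) (h2 : u ≠ -v) : (ℝ ∙ u)ᗮ ⊔ (ℝ ∙ v)ᗮ = ⊤ := by
  have hE : Module.finrank ℝ (EuclideanSpace ℝ (Fin 3)) = 3 := by simp [finrank_euclideanSpace]
  have hu0 : u ≠ 0 := by intro h; rw [h] at hu; simp at hu
  have hv0 : v ≠ 0 := by intro h; rw [h] at hv; simp at hv
  have hru : Module.finrank ℝ (ℝ ∙ u) = 1 := finrank_span_singleton hu0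
  have hrv : Module.finrank ℝ (ℝ ∙ v) = 1 := finrank_span_singleton hv0
  have hKu : Module.finrank ℝ ((ℝ ∙ u)ᗮ) = 2 := by
    have := Submodule.finrank_add_finrank_orthogonal (K := ℝ ∙ u); omega
  have hKv : Module.finrank ℝ ((ℝ ∙ v)ᗮ) = 2 := by
    have := Submodule.finrank_add_finrank_orthogonal (K := ℝ ∙ v); omega
  have hne : (ℝ ∙ u)ᗮ ≠ (ℝ ∙ v)ᗮ := by
    intro h
    have h2' : (ℝ ∙ u) = (ℝ ∙ v) := by
      have := congrArg (fun K : Submodule ℝ (EuclideanSpace ℝ (Fin 3)) => Kᗮ) h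
      simpa [Submodule.orthogonal_orthogonal] using this
    have : u ∈ (ℝ ∙ v) := h2' ▸ Submodule.mem_span_singleton_self u
    obtain ⟨c, hc⟩ := Submodule.mem_span_singleton.mp this
    have hcn : |c| = 1 := by
      have := congrArg (fun x => ‖x‖) hc
      simpa [norm_smul, hu, hv] using this
    rcases (abs_eq (by norm_num : (0:ℝ) ≤ 1)).mp hcn with rfl | rfl
    · exact h1 (by simpa using hc.symm)
    · exact h2 (by rw [← hc]; simp)
  have hlt : (ℝ ∙ u)ᗮ < (ℝ ∙ u)ᗮ ⊔ (ℝ ∙ v)ᗮ := by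
    refine lt_of_le_of_ne le_sup_left ?_
    intro h
    have hle : (ℝ ∙ v)ᗮ ≤ (ℝ ∙ u)ᗮ := h ▸ le_sup_right
    exact hne (Submodule.eq_of_le_of_finrank_eq hle (by omega)).symm
  have h3 : 2 < Module.finrank ℝ ((ℝ ∙ u)ᗮ ⊔ (ℝ ∙ v)ᗮ : Submodule ℝ _) := by
    have := Submodule.finrank_lt_finrank_of_lt hlt; omega
  have h4 : Module.finrank ℝ ((ℝ ∙ u)ᗮ ⊔ (ℝ ∙ v)ᗮ : Submodule ℝ _) ≤ 3 := by
    have := Submodule.finrank_le ((ℝ ∙ u)ᗮ ⊔ (ℝ ∙ v)ᗮ); omega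
  exact Submodule.eq_top_of_finrank_eq (by omega)

set_option synthInstance.maxHeartbeats 1000000 in
set_option maxHeartbeats 1000000 in
/-- `dΦ(a)` restricted to the tangent space: the surjectivity statement and the kernel,
where the tangent space is `{ w : ⟪a_j, w_j⟫ = 0 ∀ j }` and `dΦ(a)(w) = ∑ w_j`. -/
theorem stmt17 (N : ℕ) (hN : 3 ≤ N) (a : Fin N → EuclideanSpace ℝ (Fin 3))
    (hsph : ∀ j, ‖a j‖ = 1) (hdist : ∀ i j, i ≠ j → a i ≠ a j) :
    (∀ μ : EuclideanSpace ℝ (Fin 3), ∃ w : Fin N → EuclideanSpace ℝ (Fin 3),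
      (∀ j, ⟪a j, w j⟫ = 0) ∧ ∑ j, w j = μ) ∧
    Module.finrank ℝ
      ↥((⨅ j : Fin N, LinearMap.ker ((innerₛₗ ℝ (a j)).comp
          (LinearMap.proj j :
            (Fin N → EuclideanSpace ℝ (Fin 3)) →ₗ[ℝ] EuclideanSpace ℝ (Fin 3)))) ⊓
        LinearMap.ker (∑ j : Fin N,
          (LinearMap.proj j :
            (Fin N → EuclideanSpace ℝ (Fin 3)) →ₗ[ℝ] EuclideanSpace ℝ (Fin 3))))
      = 2 * N - 3 := by
  have surj : ∀ μ : EuclideanSpace ℝ (Fin 3), ∃ w : Fin N → EuclideanSpace ℝ (Fin 3),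
      (∀ j, ⟪a j, w j⟫ = 0) ∧ ∑ j, w j = μ := by
    obtain ⟨i, j, hij, hne, hnneg⟩ :
        ∃ i j : Fin N, i ≠ j ∧ a i ≠ a j ∧ a i ≠ -a j := by
      set i0 : Fin N := ⟨0, by omega⟩
      set i1 : Fin N := ⟨1, by omega⟩
      set i2 : Fin N := ⟨2, by omega⟩
      have h01 : i0 ≠ i1 := by simp [i0, i1, Fin.ext_iff]
      have h12 : i1 ≠ i2 := by simp [i1, i2, Fin.ext_iff]
      have h02 : i0 ≠ i2 := by simp [i0, i2, Fin.ext_iff]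
      by_cases h : a i0 = -a i1
      · refine ⟨i1, i2, h12, hdist _ _ h12, ?_⟩
        intro h'
        exact hdist i0 i2 h02 (by rw [h, h']; simp)
      · exact ⟨i0, i1, h01, hdist _ _ h01, h⟩
    intro μ
    have htop := aux_sup17 (a i) (a j) (hsph i) (hsph j) hne hnneg
    have hμ : μ ∈ (ℝ ∙ (a i))ᗮ ⊔ (ℝ ∙ (a j))ᗮ := htop ▸ Submodule.mem_top
    obtain ⟨u, hu, v, hv, huv⟩ := Submodule.mem_sup.mp hμ
    refine ⟨Pi.single i u + Pi.single j v, ?_, ?_⟩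
    · intro k
      have hu' : ⟪a i, u⟫ = 0 := hu (a i) (Submodule.mem_span_singleton_self _)
      have hv' : ⟪a j, v⟫ = 0 := hv (a j) (Submodule.mem_span_singleton_self _)
      rcases eq_or_ne k i with rfl | hki
      · rw [Pi.add_apply, Pi.single_eq_same, Pi.single_eq_of_ne hij, add_zero]
        exact hu'
      · rcases eq_or_ne k j with rfl | hkj
        · rw [Pi.add_apply, Pi.single_eq_of_ne (Ne.symm hij), Pi.single_eq_same, zero_add]
          exact hv'
        · rw [Pi.add_apply, Pi.single_eq_of_ne hki, Pi.single_eq_of_ne hkj, add_zero,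
            inner_zero_right]
    · simp [Finset.sum_add_distrib, Finset.sum_pi_single', huv]
  refine ⟨surj, ?_⟩
  set L : (Fin N → EuclideanSpace ℝ (Fin 3)) →ₗ[ℝ] EuclideanSpace ℝ (Fin 3) := ∑ j : Fin N,
      (LinearMap.proj j : (Fin N → EuclideanSpace ℝ (Fin 3)) →ₗ[ℝ] EuclideanSpace ℝ (Fin 3)) with hL
  set T : Submodule ℝ (Fin N → EuclideanSpace ℝ (Fin 3)) :=
      ⨅ j : Fin N, LinearMap.ker ((innerₛₗ ℝ (a j)).comp
      (LinearMap.proj j : (Fin N → EuclideanSpace ℝ (Fin 3)) →ₗ[ℝ] EuclideanSpace ℝ (Fin 3))) with hT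
  have hLapp : ∀ w : Fin N → EuclideanSpace ℝ (Fin 3), L w = ∑ j, w j := by
    intro w; simp [hL, LinearMap.sum_apply]
  have hTmem : ∀ w : Fin N → EuclideanSpace ℝ (Fin 3), w ∈ T ↔ ∀ j, ⟪a j, w j⟫ = 0 := by
    intro w
    simp [hT, Submodule.mem_iInf, LinearMap.mem_ker]
  have hG : ∃ G : (Fin N → EuclideanSpace ℝ (Fin 3)) →ₗ[ℝ] (Fin N → ℝ),
      LinearMap.ker G = T ∧ Function.Surjective G := by
    refine ⟨LinearMap.pi (fun j => (innerₛₗ ℝ (a j)).comp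
      (LinearMap.proj j : (Fin N → EuclideanSpace ℝ (Fin 3)) →ₗ[ℝ] EuclideanSpace ℝ (Fin 3))), ?_, ?_⟩
    · ext w
      simp [LinearMap.mem_ker, hTmem w, funext_iff]
    · intro c
      refine ⟨fun j => c j • a j, ?_⟩
      ext j
      have h1 : ⟪a j, a j⟫ = 1 := by
        rw [real_inner_self_eq_norm_sq, hsph j]; norm_num
      show ⟪a j, c j • a j⟫ = c j
      rw [real_inner_smul_right, h1, mul_one]
  obtain ⟨G, hkerG, hsurjG⟩ := hG
  have hTrank : Module.finrank ℝ T = 2 * N := by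
    have h1 := LinearMap.finrank_range_add_finrank_ker G
    rw [hkerG, LinearMap.range_eq_top.mpr hsurjG, finrank_top] at h1
    have h2 : Module.finrank ℝ (Fin N → EuclideanSpace ℝ (Fin 3)) = 3 * N := by
      simp [Module.finrank_pi_fintype, finrank_euclideanSpace]; ring
    have h3 : Module.finrank ℝ (Fin N → ℝ) = N := by simp
    omega
  set L' := L.domRestrict T with hL'
  have hrange : LinearMap.range L' = ⊤ := by
    rw [LinearMap.range_eq_top]
    intro μ
    obtain ⟨w, hw1, hw2⟩ := surj μ
    refine ⟨⟨w, (hTmem w).mpr hw1⟩, ?_⟩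
    simp [hL', LinearMap.domRestrict_apply, hLapp, hw2]
  have hker : Module.finrank ℝ (LinearMap.ker L') = Module.finrank ℝ ↥(T ⊓ LinearMap.ker L) := by
    have h1 : LinearMap.ker L' = Submodule.comap T.subtype (T ⊓ LinearMap.ker L) := by
      rw [hL', LinearMap.ker_domRestrict, Submodule.comap_inf, Submodule.comap_subtype_self]
      simp
    rw [h1]
    exact (Submodule.comapSubtypeEquivOfLe (inf_le_left : T ⊓ LinearMap.ker L ≤ T)).finrank_eq
  have h4 := LinearMap.finrank_range_add_finrank_ker L'
  rw [hrange, finrank_top, hker] at h4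
  have h6 : Module.finrank ℝ (EuclideanSpace ℝ (Fin 3)) = 3 := by simp [finrank_euclideanSpace]
  rw [h6] at h4
  omega

end
end
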